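/- arXiv:math-ph/0001018 — 6 statements merged into one kernel-verified Lean document; each statement's English description precedes it below -/
import Mathlib

section
/- For natural numbers k ≤ j ≤ n with k ≥ 1, the difference between the ratio of binomial coefficients C(n-k, j-k)/C(n, j) = [j(j-1)···(j-k+1)]/[n(n-1)···(n-k+1)] and (j/n)^k is bounded in absolute value by (1/n)(1+k)^k. -/
open Finset

lemma prod_sub_eq_factorial (k j : ℕ) (hkj : k ≤ j) :
    ∏ i ∈ range k, ((j : ℝ) - i) = (j.factorial : ℝ) / ((j - k).factorial : ℝ) := by
  induction k with
  | zero => simp [div_self (by exact_mod_cast j.factorial_ne_zero : ((j.factorial : ℝ)) ≠ 0)]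
  | succ k ih =>
    have hk : k ≤ j := Nat.le_of_succ_le hkj
    rw [prod_range_succ, ih hk]
    have h1 : j - k = (j - (k+1)) + 1 := by omega
    have h2 : ((j - k).factorial : ℝ) = ((j - k : ℕ) : ℝ) * ((j - (k+1)).factorial : ℝ) := by
      rw [h1, Nat.factorial_succ]; push_cast [h1]; ring
    have h3 : ((j - k : ℕ) : ℝ) = (j : ℝ) - k := by
      push_cast [Nat.cast_sub hk]; ring
    rw [h2, h3]
    have hne : (j : ℝ) - k ≠ 0 := by
      have : (k : ℝ) < j := by exact_mod_cast hkj
      linarith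
    have hf : ((j - (k+1)).factorial : ℝ) ≠ 0 := by exact_mod_cast (j - (k+1)).factorial_ne_zero
    field_simp

lemma part1 (k j n : ℕ) (hkj : k ≤ j) (hjn : j ≤ n) :
    (((n - k).choose (j - k) : ℝ) / (n.choose j : ℝ))
      = (∏ i ∈ range k, ((j : ℝ) - i)) / (∏ i ∈ range k, ((n : ℝ) - i)) := by
  have hkn : k ≤ n := hkj.trans hjn
  rw [prod_sub_eq_factorial k j hkj, prod_sub_eq_factorial k n hkn]
  rw [Nat.cast_choose ℝ (by omega : j - k ≤ n - k), Nat.cast_choose ℝ hjn]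
  have h : (n - k) - (j - k) = n - j := by omega
  rw [h]
  have f1 : ((j.factorial : ℝ)) ≠ 0 := by exact_mod_cast j.factorial_ne_zero
  have f2 : ((n.factorial : ℝ)) ≠ 0 := by exact_mod_cast n.factorial_ne_zero
  have f3 : (((j - k).factorial : ℝ)) ≠ 0 := by exact_mod_cast (j-k).factorial_ne_zero
  have f4 : (((n - k).factorial : ℝ)) ≠ 0 := by exact_mod_cast (n-k).factorial_ne_zero
  have f5 : (((n - j).factorial : ℝ)) ≠ 0 := by exact_mod_cast (n-j).factorial_ne_zero
  field_simp

lemma key (j n : ℕ) (hn : 0 < n) : ∀ k, k ≤ j → j ≤ n →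
    |(∏ i ∈ range k, (((j : ℝ) - i) / ((n : ℝ) - i))) - ((j : ℝ) / n) ^ k|
      ≤ (∑ i ∈ range k, (i : ℝ)) / n := by
  intro k
  induction k with
  | zero => simp
  | succ k ih =>
    intro hkj hjn
    have hk : k ≤ j := Nat.le_of_succ_le hkj
    have hnR : (0 : ℝ) < n := by exact_mod_cast hn
    have hjR : (j : ℝ) ≤ n := by exact_mod_cast hjn
    have hkR : (k : ℝ) < j := by exact_mod_cast hkj
    have hkn : (k : ℝ) < n := lt_of_lt_of_le hkR hjR
    have hnk : (0 : ℝ) < (n : ℝ) - k := by linarith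
    set P := ∏ i ∈ range k, (((j : ℝ) - i) / ((n : ℝ) - i)) with hP
    set Q := ((j : ℝ) / n) ^ k with hQ
    have hfac : ∀ i ∈ range k, (0:ℝ) ≤ ((j : ℝ) - i) / ((n : ℝ) - i) ∧
        ((j : ℝ) - i) / ((n : ℝ) - i) ≤ 1 := by
      intro i hi
      have hi' : (i : ℝ) < k := by exact_mod_cast mem_range.mp hi
      have h1 : (0:ℝ) < (n : ℝ) - i := by linarith
      have h2 : (0:ℝ) ≤ (j : ℝ) - i := by linarith
      exact ⟨div_nonneg h2 h1.le, (div_le_one h1).mpr (by linarith)⟩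
    have hP0 : 0 ≤ P := prod_nonneg fun i hi => (hfac i hi).1
    have hP1 : P ≤ 1 := prod_le_one (fun i hi => (hfac i hi).1) (fun i hi => (hfac i hi).2)
    have hb0 : (0:ℝ) ≤ (j : ℝ) / n := div_nonneg (by positivity) hnR.le
    have hb1 : (j : ℝ) / n ≤ 1 := (div_le_one hnR).mpr hjR
    set a := ((j : ℝ) - k) / ((n : ℝ) - k) with ha
    have hab : a ≤ (j : ℝ) / n := by
      rw [ha, div_le_div_iff₀ hnk hnR]
      nlinarith
    have hba : (j : ℝ) / n - a ≤ (k : ℝ) / n := by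
      have h1 : ((j : ℝ) - k) / n ≤ a := by
        rw [ha]
        exact div_le_div_of_nonneg_left (by linarith) hnk (by linarith)
      have h2 : ((j : ℝ) - k) / n = (j : ℝ) / n - (k : ℝ) / n := by ring
      linarith
    have habs : |a - (j : ℝ) / n| ≤ (k : ℝ) / n := by
      rw [abs_sub_comm, abs_of_nonneg (by linarith)]
      exact hba
    have ha0 : 0 ≤ a := div_nonneg (by linarith) hnk.le
    rw [prod_range_succ, pow_succ]
    have expand : P * a - Q * ((j : ℝ) / n)
        = P * (a - (j : ℝ) / n) + (P - Q) * ((j : ℝ) / n) := by ring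
    calc |P * a - Q * ((j : ℝ) / n)|
        ≤ |P * (a - (j : ℝ) / n)| + |(P - Q) * ((j : ℝ) / n)| := by
          rw [expand]; exact abs_add_le _ _
      _ = |P| * |a - (j : ℝ) / n| + |P - Q| * |(j : ℝ) / n| := by
          rw [abs_mul, abs_mul]
      _ ≤ 1 * ((k : ℝ) / n) + ((∑ i ∈ range k, (i : ℝ)) / n) * 1 := by
          refine add_le_add (mul_le_mul ?_ habs (abs_nonneg _) zero_le_one)
            (mul_le_mul (ih hk hjn) ?_ (abs_nonneg _) ?_)
          · rw [abs_of_nonneg hP0]; exact hP1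
          · rw [abs_of_nonneg hb0]; exact hb1
          · positivity
      _ = (∑ i ∈ range (k+1), (i : ℝ)) / n := by
          rw [sum_range_succ]; ring

/-- For `1 ≤ k ≤ j ≤ n`, the ratio of binomial coefficients `C(n-k, j-k)/C(n, j)`
equals the falling-factorial ratio `j(j-1)⋯(j-k+1) / (n(n-1)⋯(n-k+1))`, and this
quantity differs from `(j/n)^k` by at most `(1/n)(1+k)^k`. -/
theorem stmt_0 (k j n : ℕ) (hk : 1 ≤ k) (hkj : k ≤ j) (hjn : j ≤ n) :
    (((n - k).choose (j - k) : ℝ) / (n.choose j : ℝ))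
      = (∏ i ∈ range k, ((j : ℝ) - i)) / (∏ i ∈ range k, ((n : ℝ) - i)) ∧
    |(∏ i ∈ range k, ((j : ℝ) - i)) / (∏ i ∈ range k, ((n : ℝ) - i))
      - ((j : ℝ) / n) ^ k| ≤ (1 / n) * (1 + k) ^ k := by
  have hn : 0 < n := by omega
  have hnR : (0:ℝ) < n := by exact_mod_cast hn
  refine ⟨part1 k j n hkj hjn, ?_⟩
  rw [← prod_div_distrib]
  calc |(∏ i ∈ range k, (((j : ℝ) - i) / ((n : ℝ) - i))) - ((j : ℝ) / n) ^ k|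
      ≤ (∑ i ∈ range k, (i : ℝ)) / n := key j n hn k hkj hjn
    _ ≤ (1 / n) * (1 + k) ^ k := by
        rw [div_le_iff₀ hnR] at *
        have hsum : (∑ i ∈ range k, (i : ℝ)) ≤ (k : ℝ) * k := by
          calc (∑ i ∈ range k, (i : ℝ)) ≤ ∑ _i ∈ range k, (k : ℝ) := by
                apply sum_le_sum
                intro i hi
                exact_mod_cast (mem_range.mp hi).le
            _ = (k : ℝ) * k := by simp [mul_comm]
        have hpow : (k : ℝ) * k ≤ (1 + (k : ℝ)) ^ k := by
          have : (k:ℕ) * k ≤ (1 + k) ^ k := by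
            rcases Nat.lt_or_ge k 2 with h | h
            · interval_cases k <;> norm_num
            · calc k * k ≤ (1 + k) * (1 + k) := by nlinarith
                _ = (1 + k) ^ 2 := by ring
                _ ≤ (1 + k) ^ k := Nat.pow_le_pow_right (by omega) h
          exact_mod_cast this
        calc (∑ i ∈ range k, (i : ℝ)) ≤ (1 + (k : ℝ)) ^ k := le_trans hsum hpow
          _ = 1 / ↑n * (1 + ↑k) ^ k * ↑n := by field_simp
end

section
/- Let (F_n) with F_n : {0,...,n} → ℂ satisfy Σ_j |F_n(j)| ≤ B for all n. If for each fixed k ∈ ℕ the weighted sums Σ_{j=k}^n F_n(j) · [C(n-k, j-k)/C(n,j)] converge to c·p^k as n → ∞ (with c ∈ ℂ, p ∈ [0,1]), then for each k, Σ_{j=0}^n F_n(j)(j/n)^k also converges to c·p^k as n → ∞. -/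
open Finset Filter Topology

/-!
The hypergeometric weight `C(n-k, j-k) / C(n, j)` is the falling-factorial ratio
`j^(k) / n^(k) = ∏_{i<k} (j-i)/(n-i)`, which also makes sense (and vanishes) for `j < k`.
Its factors lie in `[0,1]` and are within `k/(n-k)` of `j/n`, so it differs from `(j/n)^k`
by at most `k²/(n-k)`, uniformly in `j`. Against an `ℓ¹`-bounded `F n` the two weighted
sums therefore differ by at most `B k²/(n-k) → 0`.
-/

theorem Finset.norm_prod_sub_prod_le_sum_norm_sub {ι R : Type*} [NormedCommRing R] [NormOneClass R]
    (s : Finset ι) {a b : ι → R} (ha : ∀ i ∈ s, ‖a i‖ ≤ 1) (hb : ∀ i ∈ s, ‖b i‖ ≤ 1) :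
    ‖∏ i ∈ s, a i - ∏ i ∈ s, b i‖ ≤ ∑ i ∈ s, ‖a i - b i‖ := by
  induction s using Finset.cons_induction with
  | empty => simp
  | cons x s _ ih =>
    simp only [forall_mem_cons] at ha hb
    have hPa : ‖∏ i ∈ s, a i‖ ≤ 1 :=
      (norm_prod_le _ _).trans (prod_le_one (fun _ _ => norm_nonneg _) ha.2)
    rw [prod_cons, prod_cons, sum_cons,
      show a x * ∏ i ∈ s, a i - b x * ∏ i ∈ s, b i
        = (a x - b x) * ∏ i ∈ s, a i + b x * (∏ i ∈ s, a i - ∏ i ∈ s, b i) by ring]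
    calc _ ≤ ‖a x - b x‖ * ‖∏ i ∈ s, a i‖ + ‖b x‖ * ‖∏ i ∈ s, a i - ∏ i ∈ s, b i‖ :=
          (norm_add_le _ _).trans (add_le_add (norm_mul_le _ _) (norm_mul_le _ _))
      _ ≤ ‖a x - b x‖ * 1 + 1 * ∑ i ∈ s, ‖a i - b i‖ := by
          gcongr
          · exact hb.1
          · exact ih ha.2 hb.2
      _ = _ := by ring

theorem Nat.choose_sub_mul_descFactorial {n j k : ℕ} (hkj : k ≤ j) :
    (n - k).choose (j - k) * n.descFactorial k = j.descFactorial k * n.choose j := by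
  rw [descFactorial_eq_factorial_mul_choose, descFactorial_eq_factorial_mul_choose]
  linear_combination k.factorial * (choose_mul (n := n) hkj).symm

theorem Nat.cast_choose_sub_div_choose {K : Type*} [Field K] [CharZero K] {n j k : ℕ}
    (hkj : k ≤ j) (hjn : j ≤ n) :
    ((n - k).choose (j - k) : K) / n.choose j = j.descFactorial k / n.descFactorial k := by
  rw [div_eq_div_iff (by exact_mod_cast (Nat.choose_pos hjn).ne')
    (by exact_mod_cast (Nat.descFactorial_pos.mpr (hkj.trans hjn)).ne')]
  exact_mod_cast choose_sub_mul_descFactorial hkj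

theorem abs_natSub_div_natSub_sub_div_le {n j i k : ℕ} (hjn : j ≤ n) (hik : i ≤ k) (hkn : k < n) :
    |((j - i : ℕ) : ℝ) / (n - i : ℕ) - j / n| ≤ k / (n - k) := by
  have hn : (0 : ℝ) < n := by exact_mod_cast (Nat.zero_le k).trans_lt hkn
  have hnk : (0 : ℝ) < n - k := by rw [sub_pos]; exact_mod_cast hkn
  have hik' : (i : ℝ) ≤ k := by exact_mod_cast hik
  have hjn' : (j : ℝ) ≤ n := by exact_mod_cast hjn
  rcases le_or_gt i j with hij | hji
  · have hij' : (i : ℝ) ≤ j := by exact_mod_cast hij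
    have hni : (0 : ℝ) < n - i := by linarith
    rw [Nat.cast_sub hij, Nat.cast_sub (hik.trans hkn.le),
      show ((j : ℝ) - i) / (n - i) - j / n = -(i * (n - j) / ((n - i) * n)) by field_simp; ring,
      abs_neg, abs_of_nonneg (by apply div_nonneg <;> nlinarith), div_le_div_iff₀ (by positivity) hnk]
    have h1 : (i : ℝ) * (n - j) ≤ k * n := mul_le_mul hik' (by linarith) (by linarith) (by positivity)
    nlinarith [mul_le_mul h1 (by linarith : (n : ℝ) - k ≤ n - i) hnk.le (by positivity)]
  · rw [Nat.sub_eq_zero_of_le hji.le, Nat.cast_zero, zero_div, zero_sub, abs_neg,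
      abs_of_nonneg (by positivity), div_le_div_iff₀ hn hnk]
    have hj' : (j : ℝ) ≤ k := by exact_mod_cast (hji.trans_le hik).le
    nlinarith

theorem abs_descFactorial_div_sub_div_pow_le {n j k : ℕ} (hjn : j ≤ n) (hkn : k < n) :
    |(j.descFactorial k : ℝ) / n.descFactorial k - ((j : ℝ) / n) ^ k| ≤ k ^ 2 / (n - k) := by
  have hn : (0 : ℝ) < n := by exact_mod_cast (Nat.zero_le k).trans_lt hkn
  have hfactor : ∀ i ∈ range k, |((j - i : ℕ) : ℝ) / (n - i : ℕ)| ≤ 1 := fun i hi => by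
    rw [abs_of_nonneg (by positivity)]
    exact div_le_one_of_le₀ (by exact_mod_cast Nat.sub_le_sub_right hjn i) (Nat.cast_nonneg _)
  have hratio : |(j : ℝ) / n| ≤ 1 := by
    rw [abs_of_nonneg (by positivity)]
    exact div_le_one_of_le₀ (by exact_mod_cast hjn) hn.le
  rw [Nat.descFactorial_eq_prod_range, Nat.descFactorial_eq_prod_range, Nat.cast_prod,
    Nat.cast_prod, ← prod_div_distrib, ← card_range k, ← prod_const, card_range]
  calc _ ≤ ∑ i ∈ range k, |((j - i : ℕ) : ℝ) / (n - i : ℕ) - j / n| := by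
        simpa only [Real.norm_eq_abs] using
          norm_prod_sub_prod_le_sum_norm_sub (range k) (b := fun _ => (j : ℝ) / n) hfactor
            fun _ _ => hratio
    _ ≤ ∑ _i ∈ range k, (k : ℝ) / (n - k) := sum_le_sum fun i hi =>
        abs_natSub_div_natSub_sub_div_le hjn (mem_range.mp hi).le hkn
    _ = k ^ 2 / (n - k) := by rw [sum_const, card_range, nsmul_eq_mul]; ring

theorem sum_Icc_mul_choose_sub_div_choose {R : Type*} [Field R] [CharZero R] (f : ℕ → R) (n k : ℕ) :
    ∑ j ∈ Icc k n, f j * ((n - k).choose (j - k) / n.choose j)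
      = ∑ j ∈ range (n + 1), f j * (j.descFactorial k / n.descFactorial k) := by
  refine sum_subset_zero_on_sdiff (fun j hj => mem_range_succ_iff.mpr (mem_Icc.mp hj).2)
    (fun j hj => ?_) (fun j hj => ?_)
  · obtain ⟨hjn, hjIcc⟩ := mem_sdiff.mp hj
    have hjk : j < k := by grind [mem_range_succ_iff]
    rw [Nat.descFactorial_eq_zero_iff_lt.mpr hjk, Nat.cast_zero, zero_div, mul_zero]
  · rw [Nat.cast_choose_sub_div_choose (mem_Icc.mp hj).1 (mem_Icc.mp hj).2]

theorem tendsto_sum_mul_sub_sum_mul_of_norm_sub_le {R : Type*} [SeminormedRing R]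
    {F a b : ℕ → ℕ → R} {B : ℝ} {ε : ℕ → ℝ}
    (hB : ∀ n, ∑ j ∈ range (n + 1), ‖F n j‖ ≤ B)
    (hab : ∀ᶠ n in atTop, ∀ j ≤ n, ‖a n j - b n j‖ ≤ ε n) (hε : Tendsto ε atTop (𝓝 0)) :
    Tendsto (fun n => ∑ j ∈ range (n + 1), F n j * a n j - ∑ j ∈ range (n + 1), F n j * b n j)
      atTop (𝓝 0) := by
  refine squeeze_zero_norm' ?_ (by simpa using hε.const_mul B)
  filter_upwards [hab] with n hn
  have hε0 : 0 ≤ ε n := (norm_nonneg _).trans (hn 0 n.zero_le)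
  rw [← sum_sub_distrib]
  calc _ ≤ ∑ j ∈ range (n + 1), ‖F n j‖ * ε n := by
        refine (norm_sum_le _ _).trans (sum_le_sum fun j hj => ?_)
        rw [← mul_sub]
        exact (norm_mul_le _ _).trans
          (mul_le_mul_of_nonneg_left (hn j (mem_range_succ_iff.mp hj)) (norm_nonneg _))
    _ ≤ B * ε n := by rw [← sum_mul]; exact mul_le_mul_of_nonneg_right (hB n) hε0

theorem stmt_3_general (F : ℕ → ℕ → ℂ) (B : ℝ) (c : ℂ) (p : ℝ)
    (hB : ∀ n, ∑ j ∈ range (n + 1), ‖F n j‖ ≤ B)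
    (hhyp : ∀ k : ℕ,
      Tendsto (fun n => ∑ j ∈ Icc k n,
          F n j * (((n - k).choose (j - k) : ℂ) / (n.choose j : ℂ)))
        atTop (𝓝 (c * (p : ℂ) ^ k))) :
    ∀ k : ℕ,
      Tendsto (fun n => ∑ j ∈ range (n + 1), F n j * (((j : ℂ)) / n) ^ k)
        atTop (𝓝 (c * (p : ℂ) ^ k)) := by
  intro k
  have hweights : ∀ᶠ n : ℕ in atTop, ∀ j : ℕ, j ≤ n →
      ‖((j : ℂ) / n) ^ k - j.descFactorial k / n.descFactorial k‖ ≤ (k : ℝ) ^ 2 / (n - k) := by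
    filter_upwards [eventually_gt_atTop k] with n hkn j hjn
    have h := abs_descFactorial_div_sub_div_pow_le hjn hkn
    rw [← Real.norm_eq_abs, ← Complex.norm_real] at h
    rw [norm_sub_rev]
    push_cast at h
    exact h
  have hε : Tendsto (fun n : ℕ => (k : ℝ) ^ 2 / (n - k)) atTop (𝓝 0) :=
    tendsto_const_nhds.div_atTop (tendsto_atTop_add_const_right _ _ tendsto_natCast_atTop_atTop)
  have hhyp' := hhyp k
  simp_rw [sum_Icc_mul_choose_sub_div_choose] at hhyp'
  simpa using (tendsto_sum_mul_sub_sum_mul_of_norm_sub_le hB hweights hε).add hhyp'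

/-- If `F n : {0,…,n} → ℂ` has uniformly bounded ℓ¹ norm `B`, and for each fixed `k`
the hypergeometric-weighted sums `∑_{j=k}^n F n j · C(n-k, j-k)/C(n, j)` converge to
`c p^k` with `p ∈ [0,1]`, then for each `k` the monomial-weighted sums
`∑_{j=0}^n F n j (j/n)^k` also converge to `c p^k`. -/
theorem stmt_3 (F : ℕ → ℕ → ℂ) (B : ℝ) (c : ℂ) (p : ℝ)
    (hp : p ∈ Set.Icc (0 : ℝ) 1)
    (hB : ∀ n, ∑ j ∈ range (n + 1), ‖F n j‖ ≤ B)
    (hhyp : ∀ k : ℕ,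
      Tendsto (fun n => ∑ j ∈ Icc k n,
          F n j * (((n - k).choose (j - k) : ℂ) / (n.choose j : ℂ)))
        atTop (𝓝 (c * (p : ℂ) ^ k))) :
    ∀ k : ℕ,
      Tendsto (fun n => ∑ j ∈ range (n + 1), F n j * (((j : ℂ)) / n) ^ k)
        atTop (𝓝 (c * (p : ℂ) ^ k)) :=
  stmt_3_general F B c p hB hhyp
end

section
/- Let f_n : {0,1}^n → ℂ be symmetric functions (invariant under all permutations of coordinates) such that: (a) Σ_{x ∈ {0,1}^n} |f_n(x)| ≤ B for all n, and (b) there exist c ∈ ℂ and f : {0,1} → ℂ such that for each fixed k and each (x_1,...,x_k) ∈ {0,1}^k, Σ_{z ∈ {0,1}^{n-k}} f_n(x_1,...,x_k,z_1,...,z_{n-k}) → c·f(x_1)···f(x_k) as n → ∞. Then for every continuous G : [0,1] → ℂ, Σ_{x ∈ {0,1}^n} f_n(x) G(N(x)/n) → c·G(f(1)) as n → ∞, where N(x) is the number of coordinates of x equal to 1. -/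
/-!
Let `μ_n = ∑_x f_n(x) δ_{N(x)/n}`, a complex measure on `[0,1]` of total variation at most `B`.
`N(x)^m` counts the maps `[m] → [n]` landing in the ones of `x`. By symmetry every injective
such map contributes the marginal of `(1,…,1)` on the first `m` coordinates, which tends to
`c g(1)^m`, while each of the `n^m - n(n-1)⋯(n-m+1) = o(n^m)` others contributes at most `B`.
Hence `∫ p dμ_n → c p(g(1))` for every polynomial `p`, and so `|c p(g(1))| ≤ B sup_{[0,1]} |p|`.
Applied to the powers of a polynomial peaking at `g(1)`, this forces `g(1) ∈ [0,1]` unless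
`c = 0`, and Weierstrass approximation of `G` on `[0,1]` finishes the proof.
-/

open Finset Filter Topology

/-- The number of coordinates of `x : {0,1}^n` equal to `1` (i.e. `true`). -/
def countOnes {n : ℕ} (x : Fin n → Bool) : ℕ := ∑ i, if x i then 1 else 0

open Polynomial ComplexConjugate

lemma tendsto_of_forall_approx {ι α : Type*} [PseudoMetricSpace α] {l : Filter ι} {u : ι → α}
    {a : α} (K : ℝ) (h : ∀ ε > 0, ∃ v : ι → α, ∃ b, Tendsto v l (𝓝 b) ∧
      (∀ᶠ i in l, dist (u i) (v i) ≤ K * ε) ∧ dist b a ≤ K * ε) :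
    Tendsto u l (𝓝 a) := by
  refine Metric.tendsto_nhds.mpr fun δ hδ => ?_
  have hK : 0 < 3 * (|K| + 1) := by positivity
  have hKε : K * (δ / (3 * (|K| + 1))) ≤ δ / 3 := by
    rw [mul_div_assoc', div_le_div_iff₀ hK (by norm_num)]
    nlinarith [le_abs_self K]
  obtain ⟨v, b, hv, huv, hba⟩ := h _ (div_pos hδ hK)
  filter_upwards [huv, Metric.tendsto_nhds.mp hv _ (by positivity : 0 < δ / 3)] with i hi hvi
  calc dist (u i) a ≤ dist (u i) (v i) + dist (v i) b + dist b a := dist_triangle4 _ _ _ _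
    _ < δ := by linarith

lemma exists_complex_polynomial_near_of_continuousOn (a b : ℝ) (G : ℝ → ℂ)
    (hG : ContinuousOn G (Set.Icc a b)) (ε : ℝ) (hε : 0 < ε) :
    ∃ p : Polynomial ℂ, ∀ t ∈ Set.Icc a b, ‖G t - p.eval (t : ℂ)‖ < ε := by
  obtain ⟨pre, hre⟩ := exists_polynomial_near_of_continuousOn a b _
    (Complex.continuous_re.comp_continuousOn hG) (ε / 2) (half_pos hε)
  obtain ⟨pim, him⟩ := exists_polynomial_near_of_continuousOn a b _
    (Complex.continuous_im.comp_continuousOn hG) (ε / 2) (half_pos hε)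
  refine ⟨pre.map Complex.ofRealHom + Polynomial.C Complex.I * pim.map Complex.ofRealHom,
    fun t ht => ?_⟩
  have hev : ∀ q : Polynomial ℝ, (q.map Complex.ofRealHom).eval (t : ℂ) = ((q.eval t : ℝ) : ℂ) :=
    fun q => by rw [Polynomial.eval_map]; exact Polynomial.eval₂_at_apply _ t
  have hre' := hre t ht
  have him' := him t ht
  rw [abs_sub_comm] at hre' him'
  calc _ ≤ |(G t - _).re| + |(G t - _).im| := Complex.norm_le_abs_re_add_abs_im _
    _ < ε / 2 + ε / 2 := by
      gcongr
      · simpa [hev] using hre'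
      · simpa [hev] using him'
    _ = ε := add_halves ε

lemma exists_polynomial_eval_eq_one_norm_le_lt_one {K : Set ℝ} (hK : IsCompact K)
    (hKne : K.Nonempty) {z : ℂ} (hz : ∀ t ∈ K, (t : ℂ) ≠ z) :
    ∃ q : ℂ[X], q.eval z = 1 ∧ ∃ r < 1, ∀ t ∈ K, ‖q.eval (t : ℂ)‖ ≤ r := by
  set φ : ℝ → ℝ := fun t => Complex.normSq (t - z)
  have hφ : Continuous φ := Complex.continuous_normSq.comp (by fun_prop)
  obtain ⟨t₀, ht₀, hmin⟩ := hK.exists_isMinOn hKne hφ.continuousOn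
  obtain ⟨t₁, ht₁, hmax⟩ := hK.exists_isMaxOn hKne hφ.continuousOn
  have hm : 0 < φ t₀ := Complex.normSq_pos.mpr (sub_ne_zero.mpr (hz t₀ ht₀))
  have hM : 0 < φ t₁ := hm.trans_le (hmin ht₁)
  set Q : ℂ[X] := (X - C z) * (X - C (conj z))
  have hQ : ∀ t : ℝ, Q.eval (t : ℂ) = φ t := fun t => by
    simp [Q, φ, ← Complex.mul_conj]
  -- `1 - Q / max_K Q` equals `1` at `z` and lies in `[0, 1 - min_K Q / max_K Q]` on `K`.
  refine ⟨1 - C (φ t₁ : ℂ)⁻¹ * Q, by simp [Q], 1 - φ t₀ / φ t₁,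
    sub_lt_self _ (div_pos hm hM), fun t ht => ?_⟩
  have heval : (1 - C (φ t₁ : ℂ)⁻¹ * Q).eval (t : ℂ) = ((1 - φ t / φ t₁ : ℝ) : ℂ) := by
    simp [hQ, div_eq_inv_mul]
  rw [heval, Complex.norm_real, Real.norm_eq_abs,
    abs_of_nonneg (sub_nonneg.mpr ((div_le_one hM).mpr (hmax ht)))]
  gcongr
  exact hmin ht

lemma eq_zero_or_exists_ofReal_eq_of_norm_mul_eval_le {K : Set ℝ} (hK : IsCompact K)
    (hKne : K.Nonempty) {c z : ℂ} {B : ℝ}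
    (h : ∀ (p : ℂ[X]) (C : ℝ), (∀ t ∈ K, ‖p.eval (t : ℂ)‖ ≤ C) → ‖c * p.eval z‖ ≤ B * C) :
    c = 0 ∨ ∃ t ∈ K, (t : ℂ) = z := by
  by_contra! hcz
  obtain ⟨hc, hz⟩ := hcz
  obtain ⟨q, hqz, r, hr1, hq⟩ := exists_polynomial_eval_eq_one_norm_le_lt_one hK hKne hz
  have hr0 : 0 ≤ r := (norm_nonneg _).trans (hq _ hKne.some_mem)
  have hbound : ∀ k : ℕ, ‖c‖ ≤ B * r ^ k := fun k => by
    simpa [hqz] using h (q ^ k) (r ^ k) fun t ht => by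
      rw [eval_pow, norm_pow]; exact pow_le_pow_left₀ (norm_nonneg _) (hq t ht) k
  have hc0 : ‖c‖ ≤ B * 0 := ge_of_tendsto
    ((tendsto_pow_atTop_nhds_zero_of_lt_one hr0 hr1).const_mul B) (Eventually.of_forall hbound)
  exact hc (norm_le_zero_iff.mp (by simpa using hc0))

section Combinatorics

variable {m n : ℕ}

lemma countOnes_eq_card (x : Fin n → Bool) : countOnes x = #{i | x i = true} := by
  simp [countOnes, sum_boole]

lemma countOnes_le (x : Fin n → Bool) : countOnes x ≤ n :=
  (countOnes_eq_card x).trans_le ((card_filter_le _ _).trans_eq (card_fin n))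

lemma countOnes_pow_eq_card (x : Fin n → Bool) :
    countOnes x ^ m = #{v : Fin m → Fin n | ∀ j, x (v j) = true} := by
  have : ({v : Fin m → Fin n | ∀ j, x (v j) = true} : Finset _) =
      Fintype.piFinset fun _ => {i | x i = true} := by
    ext v; simp
  rw [this, Fintype.card_piFinset, prod_const, card_univ, Fintype.card_fin, countOnes_eq_card]

def sumOnesOn (F : (Fin n → Bool) → ℂ) (v : Fin m → Fin n) : ℂ :=
  ∑ x with ∀ j, x (v j) = true, F x

lemma sum_mul_countOnes_pow (F : (Fin n → Bool) → ℂ) :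
    ∑ x, F x * (countOnes x : ℂ) ^ m = ∑ v : Fin m → Fin n, sumOnesOn F v := by
  simp_rw [sumOnesOn, sum_filter, ← Nat.cast_pow, countOnes_pow_eq_card, card_filter,
    Nat.cast_sum, mul_sum, Nat.cast_ite, Nat.cast_one, Nat.cast_zero, mul_ite, mul_one, mul_zero]
  exact sum_comm

lemma sumOnesOn_eq_of_injective {F : (Fin n → Bool) → ℂ}
    (hF : ∀ (σ : Equiv.Perm (Fin n)) x, F (x ∘ σ) = F x) {u v : Fin m → Fin n}
    (hu : Function.Injective u) (hv : Function.Injective v) : sumOnesOn F u = sumOnesOn F v := by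
  obtain ⟨σ, hσ⟩ := Equiv.Perm.exists_extending_pair u v hu hv
  simp_rw [sumOnesOn, sum_filter]
  refine Fintype.sum_equiv (σ.arrowCongr (Equiv.refl Bool)) _ _ fun x => ?_
  change _ = if ∀ j, (x ∘ σ.symm) (v j) = true then F (x ∘ σ.symm) else 0
  simp only [hF, Function.comp_apply, ← hσ, Equiv.symm_apply_apply]

lemma norm_sumOnesOn_le (F : (Fin n → Bool) → ℂ) (v : Fin m → Fin n) :
    ‖sumOnesOn F v‖ ≤ ∑ x, ‖F x‖ :=
  (norm_sum_le _ _).trans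
    (sum_le_sum_of_subset_of_nonneg (filter_subset _ _) fun _ _ _ => norm_nonneg _)

lemma sumOnesOn_castLE (h : m ≤ n) (F : (Fin n → Bool) → ℂ) :
    sumOnesOn F (Fin.castLE h) = ∑ y with ∀ i : Fin n, (hi : (i : ℕ) < m) → y i = true, F y := by
  exact sum_congr (filter_congr fun y _ => ⟨fun hy i hi => hy ⟨i, hi⟩, fun hy j => hy _ j.2⟩)
    fun _ _ => rfl

lemma card_filter_injective :
    #{v : Fin m → Fin n | Function.Injective v} = n.descFactorial m := by
  rw [← Fintype.card_subtype, Fintype.card_congr (Equiv.subtypeInjectiveEquivEmbedding _ _),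
    Fintype.card_embedding_eq, Fintype.card_fin, Fintype.card_fin]

lemma norm_sum_mul_countOnes_pow_sub_le {F : (Fin n → Bool) → ℂ} {A : ℂ}
    (hA : ∀ v : Fin m → Fin n, Function.Injective v → sumOnesOn F v = A) :
    ‖∑ x, F x * (countOnes x : ℂ) ^ m - n.descFactorial m * A‖ ≤
      ((n : ℝ) ^ m - n.descFactorial m) * ∑ x, ‖F x‖ := by
  have hcard : (#{v : Fin m → Fin n | ¬ Function.Injective v} : ℝ) = n ^ m - n.descFactorial m := by
    rw [eq_sub_iff_add_eq, ← card_filter_injective, ← Nat.cast_add, add_comm,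
      card_filter_add_card_filter_not]
    simp
  rw [sum_mul_countOnes_pow, ← sum_filter_add_sum_filter_not _ Function.Injective,
    sum_congr rfl fun v hv => hA v (mem_filter.mp hv).2, sum_const, card_filter_injective,
    nsmul_eq_mul, add_sub_cancel_left, ← hcard, ← nsmul_eq_mul]
  exact (norm_sum_le _ _).trans (sum_le_card_nsmul _ _ _ fun v _ => norm_sumOnesOn_le F v)

end Combinatorics

/-- `∫ φ dμ` for the complex measure `μ = ∑_x F x • δ_{N(x)/n}`. -/
noncomputable def sumByCount {n : ℕ} (F : (Fin n → Bool) → ℂ) (φ : ℂ → ℂ) : ℂ :=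
  ∑ x, F x * φ (countOnes x / n)

lemma countOnes_div_eq_ofReal {n : ℕ} (x : Fin n → Bool) :
    (countOnes x : ℂ) / n = ((countOnes x / n : ℝ) : ℂ) := by
  push_cast; rfl

lemma countOnes_div_mem_Icc {n : ℕ} (x : Fin n → Bool) : (countOnes x : ℝ) / n ∈ Set.Icc 0 1 :=
  ⟨by positivity, div_le_one_of_le₀ (mod_cast countOnes_le x) n.cast_nonneg⟩

lemma norm_sumByCount_le {n : ℕ} {F : (Fin n → Bool) → ℂ} {B C : ℝ} (hF : ∑ x, ‖F x‖ ≤ B)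
    {φ : ℂ → ℂ} (hφ : ∀ t ∈ Set.Icc (0 : ℝ) 1, ‖φ t‖ ≤ C) : ‖sumByCount F φ‖ ≤ B * C := by
  have hC : 0 ≤ C := (norm_nonneg _).trans (hφ 0 ⟨le_rfl, zero_le_one⟩)
  calc ‖sumByCount F φ‖ ≤ ∑ x, ‖F x‖ * C := by
        refine (norm_sum_le _ _).trans (sum_le_sum fun x _ => ?_)
        rw [norm_mul, countOnes_div_eq_ofReal]
        exact mul_le_mul_of_nonneg_left (hφ _ (countOnes_div_mem_Icc x)) (norm_nonneg _)
    _ ≤ B * C := by rw [← sum_mul]; exact mul_le_mul_of_nonneg_right hF hC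

section Limits

variable {f : (n : ℕ) → (Fin n → Bool) → ℂ} {B : ℝ} {c z : ℂ}
  (hsym : ∀ n (π : Equiv.Perm (Fin n)) (x : Fin n → Bool), f n (x ∘ π) = f n x)
  (hB : ∀ n, ∑ x : Fin n → Bool, ‖f n x‖ ≤ B)
  (hmarg : ∀ m : ℕ, Tendsto (fun n => ∑ y with ∀ i : Fin n, (hi : (i : ℕ) < m) → y i = true, f n y)
    atTop (𝓝 (c * z ^ m)))
include hsym hB hmarg

lemma tendsto_sumByCount_pow (m : ℕ) :
    Tendsto (fun n => sumByCount (f n) (· ^ m)) atTop (𝓝 (c * z ^ m)) := by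
  set A : ℕ → ℂ := fun n => ∑ y with ∀ i : Fin n, (hi : (i : ℕ) < m) → y i = true, f n y
  set ρ : ℕ → ℝ := fun n => n.descFactorial m / (n : ℝ) ^ m
  have hρ : Tendsto ρ atTop (𝓝 1) :=
    (Asymptotics.isEquivalent_iff_tendsto_one
      ((eventually_gt_atTop 0).mono fun n hn => by positivity)).mp
      (isEquivalent_descFactorial m)
  have hA : ∀ n, ∀ v : Fin m → Fin n, Function.Injective v → sumOnesOn (f n) v = A n :=
    fun n v hv => by
      have hmn : m ≤ n := by simpa using Fintype.card_le_of_injective v hv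
      rw [sumOnesOn_eq_of_injective (hsym n) hv (Fin.castLE_injective hmn), sumOnesOn_castLE]
  have hlim : Tendsto (fun n => (ρ n : ℂ) * A n) atTop (𝓝 (c * z ^ m)) := by
    simpa using ((Complex.continuous_ofReal.tendsto 1).comp hρ).mul (hmarg m)
  have herr : Tendsto (fun n => (1 - ρ n) * B) atTop (𝓝 0) := by
    simpa using (tendsto_const_nhds (x := (1 : ℝ)) |>.sub hρ).mul_const B
  refine hlim.congr_dist (squeeze_zero' (Eventually.of_forall fun n => dist_nonneg) ?_ herr)
  filter_upwards [eventually_gt_atTop 0] with n hn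
  have hnm : (0 : ℝ) < (n : ℝ) ^ m := by positivity
  have hsum : sumByCount (f n) (· ^ m) - ρ n * A n =
      (∑ x, f n x * (countOnes x : ℂ) ^ m - n.descFactorial m * A n) / (n : ℂ) ^ m := by
    simp only [sumByCount, ρ, div_pow, ← mul_div_assoc, ← sum_div]
    push_cast
    ring
  rw [dist_comm, dist_eq_norm, hsum, norm_div, norm_pow, Complex.norm_natCast]
  calc _ ≤ ((n : ℝ) ^ m - n.descFactorial m) * B / (n : ℝ) ^ m := by
        gcongr
        exact (norm_sum_mul_countOnes_pow_sub_le (hA n)).trans (mul_le_mul_of_nonneg_left (hB n)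
          (sub_nonneg.mpr (mod_cast Nat.descFactorial_le_pow n m)))
    _ = (1 - ρ n) * B := by simp only [ρ]; field_simp

lemma tendsto_sumByCount_eval (p : ℂ[X]) :
    Tendsto (fun n => sumByCount (f n) p.eval) atTop (𝓝 (c * p.eval z)) := by
  have hlin : ∀ n, sumByCount (f n) p.eval =
      ∑ i ∈ range (p.natDegree + 1), p.coeff i * sumByCount (f n) (· ^ i) := fun n => by
    simp_rw [sumByCount, eval_eq_sum_range, mul_sum]
    rw [sum_comm]
    exact sum_congr rfl fun i _ => sum_congr rfl fun x _ => by ring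
  simp_rw [hlin, eval_eq_sum_range, mul_sum]
  exact tendsto_finsetSum _ fun i _ => by
    simpa [mul_left_comm] using (tendsto_sumByCount_pow hsym hB hmarg i).const_mul (p.coeff i)

lemma norm_mul_eval_le (p : ℂ[X]) (C : ℝ) (hp : ∀ t ∈ Set.Icc (0 : ℝ) 1, ‖p.eval (t : ℂ)‖ ≤ C) :
    ‖c * p.eval z‖ ≤ B * C :=
  le_of_tendsto' (tendsto_sumByCount_eval hsym hB hmarg p).norm fun n =>
    norm_sumByCount_le (hB n) hp

end Limits

/-- Key combinatorial lemma, part (i).  Let `f n : {0,1}^n → ℂ` be symmetric with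
`∑_x |f n x| ≤ B`, and suppose that for each fixed `k` and `x ∈ {0,1}^k` the partial
sums over the remaining coordinates converge to `c · g(x₁)⋯g(x_k)`.  Then for every
continuous `G`, `∑_x f n x · G(N(x)/n) → c · G(g(1))`. -/
theorem stmt_4 (f : (n : ℕ) → (Fin n → Bool) → ℂ) (B : ℝ) (c : ℂ) (g : Bool → ℂ)
    (hsym : ∀ n (π : Equiv.Perm (Fin n)) (x : Fin n → Bool), f n (x ∘ π) = f n x)
    (hB : ∀ n, ∑ x : Fin n → Bool, ‖f n x‖ ≤ B)
    (hmarg : ∀ (k : ℕ) (x : Fin k → Bool),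
      Tendsto (fun n => ∑ y ∈ univ.filter
            (fun y : Fin n → Bool => ∀ i : Fin n, (h : (i : ℕ) < k) → y i = x ⟨i, h⟩),
          f n y)
        atTop (𝓝 (c * ∏ r : Fin k, g (x r))))
    (G : ℂ → ℂ) (hG : Continuous G) :
    Tendsto (fun n => ∑ x : Fin n → Bool, f n x * G ((countOnes x : ℂ) / n))
      atTop (𝓝 (c * G (g true))) := by
  have hmarg' : ∀ m : ℕ, Tendsto
      (fun n => ∑ y with ∀ i : Fin n, (hi : (i : ℕ) < m) → y i = true, f n y)
      atTop (𝓝 (c * g true ^ m)) := fun m => by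
    simpa using hmarg m fun _ => true
  have hz := eq_zero_or_exists_ofReal_eq_of_norm_mul_eval_le isCompact_Icc
    ⟨0, Set.left_mem_Icc.mpr zero_le_one⟩ (norm_mul_eval_le hsym hB hmarg')
  refine tendsto_of_forall_approx (B + ‖c‖) fun ε hε => ?_
  obtain ⟨p, hp⟩ := exists_complex_polynomial_near_of_continuousOn 0 1 (fun t => G t)
    (hG.comp Complex.continuous_ofReal).continuousOn ε hε
  have hB0 : 0 ≤ B := (sum_nonneg fun x _ => norm_nonneg (f 0 x)).trans (hB 0)
  refine ⟨fun n => sumByCount (f n) p.eval, c * p.eval (g true),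
    tendsto_sumByCount_eval hsym hB hmarg' p, Eventually.of_forall fun n => ?_, ?_⟩
  · rw [dist_eq_norm]
    calc _ = ‖sumByCount (f n) fun t => G t - p.eval t‖ := by
          simp [sumByCount, mul_sub, sum_sub_distrib]
      _ ≤ B * ε := norm_sumByCount_le (hB n) fun t ht => (hp t ht).le
      _ ≤ (B + ‖c‖) * ε := by gcongr; exact le_add_of_nonneg_right (norm_nonneg c)
  · rcases hz with rfl | ⟨t, ht, hzt⟩
    · simpa using mul_nonneg hB0 hε.le
    · rw [dist_eq_norm, ← mul_sub, norm_mul, norm_sub_rev, ← hzt]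
      calc _ ≤ ‖c‖ * ε := by gcongr; exact (hp t ht).le
        _ ≤ (B + ‖c‖) * ε := by gcongr; exact le_add_of_nonneg_left hB0
end

section
/- Under the hypotheses of the previous lemma, if additionally c ≠ 0, then f(0), f(1) ∈ [0,1] and f(0) + f(1) = 1. -/
/-!
Summing the marginal limits over all prefixes `x ∈ α^k` shows that the total mass
`∑_y f n y` tends to `c · (∑_a g a)^k` for every `k`, while the total variation bound gives
`‖c‖ · (∑_a ‖g a‖)^k ≤ B`. Comparing `k = 0` and `k = 1` yields `g 0 + g 1 = 1`, and letting
`k → ∞` yields `‖g 0‖ + ‖g 1‖ ≤ 1`; since `Re ≤ ‖·‖`, both values must be nonnegative reals.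
-/

open Finset Filter Topology

/-- For `k > n` only the first `n` coordinates of `x` are matched. -/
def prefixCylinder {α : Type*} [Fintype α] [DecidableEq α] {n k : ℕ} (x : Fin k → α) :
    Finset (Fin n → α) :=
  univ.filter fun y => ∀ i : Fin n, (h : (i : ℕ) < k) → y i = x ⟨i, h⟩

section Marginals

variable {α : Type*} [Fintype α] [DecidableEq α]

theorem prefixCylinder_eq_filter_restrict {n k : ℕ} (hkn : k ≤ n) (x : Fin k → α) :
    prefixCylinder (n := n) x = univ.filter fun y => (fun r => y (Fin.castLE hkn r)) = x := by
  ext y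
  simp only [prefixCylinder, mem_filter, mem_univ, true_and, funext_iff]
  exact ⟨fun h r => h (Fin.castLE hkn r) r.2, fun h i hi => h ⟨i, hi⟩⟩

theorem sum_sum_prefixCylinder {M : Type*} [AddCommMonoid M] {n k : ℕ} (hkn : k ≤ n)
    (F : (Fin n → α) → M) :
    ∑ x : Fin k → α, ∑ y ∈ prefixCylinder x, F y = ∑ y, F y := by
  simp only [prefixCylinder_eq_filter_restrict hkn]
  exact sum_fiberwise univ _ F

theorem tendsto_sum_of_tendsto_sum_prefixCylinder {R : Type*} [CommSemiring R]
    [TopologicalSpace R] [ContinuousAdd R] {f : (n : ℕ) → (Fin n → α) → R} {c : R}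
    {g : α → R} (k : ℕ)
    (hmarg : ∀ x : Fin k → α,
      Tendsto (fun n => ∑ y ∈ prefixCylinder x, f n y) atTop (𝓝 (c * ∏ r, g (x r)))) :
    Tendsto (fun n => ∑ y, f n y) atTop (𝓝 (c * (∑ a, g a) ^ k)) := by
  rw [Fintype.sum_pow, mul_sum]
  refine (tendsto_finsetSum _ fun x _ => hmarg x).congr' ?_
  filter_upwards [eventually_ge_atTop k] with n hkn
  exact sum_sum_prefixCylinder hkn _

theorem norm_mul_sum_norm_pow_le {𝕜 : Type*} [NormedField 𝕜]
    {f : (n : ℕ) → (Fin n → α) → 𝕜} {B : ℝ} {c : 𝕜} {g : α → 𝕜}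
    (hB : ∀ n, ∑ y, ‖f n y‖ ≤ B) (k : ℕ)
    (hmarg : ∀ x : Fin k → α,
      Tendsto (fun n => ∑ y ∈ prefixCylinder x, f n y) atTop (𝓝 (c * ∏ r, g (x r)))) :
    ‖c‖ * (∑ a, ‖g a‖) ^ k ≤ B := by
  have hlim : Tendsto (fun n => ∑ x : Fin k → α, ‖∑ y ∈ prefixCylinder x, f n y‖) atTop
      (𝓝 (‖c‖ * (∑ a, ‖g a‖) ^ k)) := by
    rw [Fintype.sum_pow, mul_sum]
    refine tendsto_finsetSum _ fun x _ => ?_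
    simpa only [norm_mul, norm_prod] using (hmarg x).norm
  refine le_of_tendsto hlim ?_
  filter_upwards [eventually_ge_atTop k] with n hkn
  calc ∑ x : Fin k → α, ‖∑ y ∈ prefixCylinder x, f n y‖
      ≤ ∑ x : Fin k → α, ∑ y ∈ prefixCylinder x, ‖f n y‖ :=
        sum_le_sum fun x _ => norm_sum_le _ _
    _ = ∑ y, ‖f n y‖ := sum_sum_prefixCylinder hkn _
    _ ≤ B := hB n

end Marginals

theorem le_one_of_forall_mul_pow_le {a s B : ℝ} (ha : 0 < a) (h : ∀ k : ℕ, a * s ^ k ≤ B) :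
    s ≤ 1 := by
  by_contra! hs
  obtain ⟨k, hk⟩ := pow_unbounded_of_one_lt (B / a) hs
  exact ((div_lt_iff₀' ha).mp hk).not_ge (h k)

open scoped ComplexOrder in
theorem Complex.im_eq_zero_and_re_mem_Icc_of_add_eq_one {z w : ℂ} (hsum : z + w = 1)
    (hnorm : ‖z‖ + ‖w‖ ≤ 1) : z.im = 0 ∧ z.re ∈ Set.Icc (0 : ℝ) 1 := by
  have hre : z.re + w.re = 1 := by simpa using congrArg Complex.re hsum
  have hz := Complex.re_le_norm z
  have hw := Complex.re_le_norm w
  have hz0 : 0 ≤ z := Complex.re_eq_norm.mp (by linarith)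
  have hw0 : 0 ≤ w := Complex.re_eq_norm.mp (by linarith)
  rw [Complex.nonneg_iff] at hz0 hw0
  exact ⟨hz0.2.symm, hz0.1, by linarith [hw0.1]⟩

theorem stmt_5_general (f : (n : ℕ) → (Fin n → Bool) → ℂ) (B : ℝ) (c : ℂ) (g : Bool → ℂ)
    (hB : ∀ n, ∑ x : Fin n → Bool, ‖f n x‖ ≤ B)
    (hmarg : ∀ (k : ℕ) (x : Fin k → Bool),
      Tendsto (fun n => ∑ y ∈ univ.filter
            (fun y : Fin n → Bool => ∀ i : Fin n, (h : (i : ℕ) < k) → y i = x ⟨i, h⟩),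
          f n y)
        atTop (𝓝 (c * ∏ r : Fin k, g (x r))))
    (hc : c ≠ 0) :
    (∀ b : Bool, (g b).im = 0 ∧ (g b).re ∈ Set.Icc (0 : ℝ) 1) ∧
      g false + g true = 1 := by
  have hsum : g false + g true = 1 := by
    have h0 := tendsto_sum_of_tendsto_sum_prefixCylinder 0 (hmarg 0)
    have h1 := tendsto_sum_of_tendsto_sum_prefixCylinder 1 (hmarg 1)
    have hc1 : c * 1 = c * (g false + g true) := by
      simpa [add_comm] using tendsto_nhds_unique h0 h1
    exact (mul_left_cancel₀ hc hc1).symm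
  have hnorm : ‖g false‖ + ‖g true‖ ≤ 1 := by
    have := le_one_of_forall_mul_pow_le (norm_pos_iff.mpr hc)
      fun k => norm_mul_sum_norm_pow_le hB k (hmarg k)
    simpa [add_comm] using this
  refine ⟨fun b => ?_, hsum⟩
  cases b
  · exact Complex.im_eq_zero_and_re_mem_Icc_of_add_eq_one hsum hnorm
  · exact Complex.im_eq_zero_and_re_mem_Icc_of_add_eq_one (by rwa [add_comm])
      (by rwa [add_comm])

/-- Key combinatorial lemma, part (ii).  Let `f n : {0,1}^n → ℂ` be symmetric with
`∑_x |f n x| ≤ B`, and suppose that for each fixed `k` and `x ∈ {0,1}^k` the partial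
sums over the remaining coordinates converge to `c · g(x₁)⋯g(x_k)`.  If `c ≠ 0`,
then `g(0)` and `g(1)` are real numbers in `[0,1]` and `g(0) + g(1) = 1`. -/
theorem stmt_5 (f : (n : ℕ) → (Fin n → Bool) → ℂ) (B : ℝ) (c : ℂ) (g : Bool → ℂ)
    (hsym : ∀ n (π : Equiv.Perm (Fin n)) (x : Fin n → Bool), f n (x ∘ π) = f n x)
    (hB : ∀ n, ∑ x : Fin n → Bool, ‖f n x‖ ≤ B)
    (hmarg : ∀ (k : ℕ) (x : Fin k → Bool),
      Tendsto (fun n => ∑ y ∈ univ.filter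
            (fun y : Fin n → Bool => ∀ i : Fin n, (h : (i : ℕ) < k) → y i = x ⟨i, h⟩),
          f n y)
        atTop (𝓝 (c * ∏ r : Fin k, g (x r))))
    (hc : c ≠ 0) :
    (∀ b : Bool, (g b).im = 0 ∧ (g b).re ∈ Set.Icc (0 : ℝ) 1) ∧
      g false + g true = 1 :=
  stmt_5_general f B c g hB hmarg hc
end

section
/- Let a, d ≥ 0 with a + d = 1 and c ∈ ℂ, and define for t ≥ 0 the 2×2 matrix D(t) with entries D(t)_{11} = a, D(t)_{22} = d, D(t)_{12} = c·exp(it(H + ℏJ(a−d))), D(t)_{21} = conj(c)·exp(−it(H + ℏJ(a−d))). Then D(t) satisfies the mean-field evolution equation dD/dt = −(i/ℏ)[V, D⊗D]^{(1)} with D(0) having entries a, c, conj(c), d, where V is the two-spin Curie-Weiss interaction V = −2Jσ^z⊗σ^z − H(σ^z⊗I + I⊗σ^z) restricted suitably, and [A]^{(1)} denotes the partial trace over the second factor: ⟨[V,D⊗D]^{(1)} x, x⟩ = Σ_i ⟨[V,D⊗D](x⊗y_i), x⊗y_i⟩ for an orthonormal basis {y_i} of ℂ². -/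
open Matrix Finset Kronecker

/-- The single-spin operator `σᶻ = (ℏ/2) diag(1, -1)` on `ℂ²`. -/
noncomputable def sigmaZ (hbar : ℝ) : Matrix (Fin 2) (Fin 2) ℂ :=
  Matrix.diagonal ![(hbar : ℂ) / 2, -(hbar : ℂ) / 2]

/-- The two-spin Curie-Weiss interaction `V = −2J σᶻ⊗σᶻ − H (σᶻ⊗I + I⊗σᶻ)`. -/
noncomputable def cwV (hbar J H : ℝ) : Matrix (Fin 2 × Fin 2) (Fin 2 × Fin 2) ℂ :=
  (-2 * J : ℂ) • (sigmaZ hbar ⊗ₖ sigmaZ hbar)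
    - (H : ℂ) • (sigmaZ hbar ⊗ₖ (1 : Matrix (Fin 2) (Fin 2) ℂ)
        + (1 : Matrix (Fin 2) (Fin 2) ℂ) ⊗ₖ sigmaZ hbar)

/-- Partial trace over the second tensor factor of an operator on `ℂ² ⊗ ℂ²`:
`⟨A⁽¹⁾ x, x'⟩ = ∑_i ⟨A (x ⊗ y_i), x' ⊗ y_i⟩` for an orthonormal basis `(y_i)`. -/
noncomputable def ptrSnd (A : Matrix (Fin 2 × Fin 2) (Fin 2 × Fin 2) ℂ) :
    Matrix (Fin 2) (Fin 2) ℂ :=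
  fun p q => ∑ i : Fin 2, A (p, i) (q, i)

/-- The explicitly phase-rotated single-spin density matrix of the Curie-Weiss
mean-field limit. -/
noncomputable def cwD (hbar J H : ℝ) (a d : ℝ) (c : ℂ) (t : ℝ) :
    Matrix (Fin 2) (Fin 2) ℂ :=
  !![(a : ℂ), c * Complex.exp (Complex.I * t * (H + hbar * J * (a - d)));
     (starRingEnd ℂ) c * Complex.exp (-(Complex.I * t * (H + hbar * J * (a - d)))), (d : ℂ)]


/-!
The interaction is a combination of product operators `A ⊗ B`, and the partial trace of
`[A ⊗ B, D ⊗ D]` is `tr (B D) • [A, D]`. So the nonlinear equation reads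
`dD/dt = -(i/ℏ) [h_D, D]` with the mean-field Hamiltonian `h_D = -(2J tr (σᶻ D) + H tr D) σᶻ`.
Along the family `D(t)` the diagonal, hence `h_D = -(H + ℏJ(a - d)) σᶻ` (using `a + d = 1`), is
constant, and since `σᶻ` is diagonal, `[h_D, D]` merely multiplies each entry `D p q` by a
constant; this is exactly the rate at which the phases of `D(t)` rotate.
-/

section PartialTrace

variable (A B : Matrix (Fin 2 × Fin 2) (Fin 2 × Fin 2) ℂ)

lemma ptrSnd_add : ptrSnd (A + B) = ptrSnd A + ptrSnd B := by
  ext p q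
  simp [ptrSnd, Finset.sum_add_distrib]

lemma ptrSnd_sub : ptrSnd (A - B) = ptrSnd A - ptrSnd B := by
  ext p q
  simp [ptrSnd, Finset.sum_sub_distrib]

lemma ptrSnd_smul (r : ℂ) : ptrSnd (r • A) = r • ptrSnd A := by
  ext p q
  simp [ptrSnd, mul_add]

lemma ptrSnd_kronecker (X Y : Matrix (Fin 2) (Fin 2) ℂ) : ptrSnd (X ⊗ₖ Y) = trace Y • X := by
  ext p q
  simp [ptrSnd, trace, mul_add, mul_comm]

lemma ptrSnd_kronecker_commutator (X Y D : Matrix (Fin 2) (Fin 2) ℂ) :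
    ptrSnd ((X ⊗ₖ Y) * (D ⊗ₖ D) - (D ⊗ₖ D) * (X ⊗ₖ Y)) = trace (Y * D) • (X * D - D * X) := by
  rw [← mul_kronecker_mul, ← mul_kronecker_mul, ptrSnd_sub, ptrSnd_kronecker, ptrSnd_kronecker,
    trace_mul_comm D Y, smul_sub]

end PartialTrace

lemma ptrSnd_cwV_commutator (hbar J H : ℝ) (D : Matrix (Fin 2) (Fin 2) ℂ) :
    ptrSnd (cwV hbar J H * (D ⊗ₖ D) - (D ⊗ₖ D) * cwV hbar J H)
      = (-(2 * J * trace (sigmaZ hbar * D) + H * trace D)) •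
          (sigmaZ hbar * D - D * sigmaZ hbar) := by
  have hexpand : cwV hbar J H * (D ⊗ₖ D) - (D ⊗ₖ D) * cwV hbar J H
      = (-2 * J : ℂ) •
          ((sigmaZ hbar ⊗ₖ sigmaZ hbar) * (D ⊗ₖ D) - (D ⊗ₖ D) * (sigmaZ hbar ⊗ₖ sigmaZ hbar))
        - (H : ℂ) • (((sigmaZ hbar ⊗ₖ 1) * (D ⊗ₖ D) - (D ⊗ₖ D) * (sigmaZ hbar ⊗ₖ 1))
          + ((1 ⊗ₖ sigmaZ hbar) * (D ⊗ₖ D) - (D ⊗ₖ D) * (1 ⊗ₖ sigmaZ hbar))) := by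
    simp only [cwV, sub_mul, mul_sub, add_mul, mul_add, smul_mul_assoc, mul_smul_comm]
    module
  rw [hexpand, ptrSnd_sub, ptrSnd_smul, ptrSnd_smul, ptrSnd_add, ptrSnd_kronecker_commutator,
    ptrSnd_kronecker_commutator, ptrSnd_kronecker_commutator, Matrix.one_mul, Matrix.mul_one,
    sub_self, smul_zero, add_zero]
  module

lemma commutator_diagonal_apply {ι : Type*} [Fintype ι] [DecidableEq ι] (v : ι → ℂ)
    (D : Matrix ι ι ℂ) (p q : ι) :
    (diagonal v * D - D * diagonal v) p q = (v p - v q) * D p q := by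
  rw [Matrix.sub_apply, diagonal_mul, mul_diagonal, sub_mul, mul_comm (D p q)]

noncomputable def spinZ : Fin 2 → ℂ := ![1 / 2, -1 / 2]

lemma sigmaZ_eq_diagonal (hbar : ℝ) : sigmaZ hbar = diagonal fun i => (hbar : ℂ) * spinZ i := by
  rw [sigmaZ, spinZ]
  congr 1
  ext i
  fin_cases i <;> simp [div_eq_mul_inv]

lemma hasDerivAt_mul_cexp_I_mul (c w : ℂ) (t : ℝ) :
    HasDerivAt (fun s : ℝ => c * Complex.exp (Complex.I * s * w))
      (Complex.I * w * (c * Complex.exp (Complex.I * t * w))) t := by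
  have hlin : HasDerivAt (fun s : ℝ => Complex.I * s * w) (Complex.I * w) t := by
    simpa using ((Complex.ofRealCLM.hasDerivAt (x := t)).const_mul Complex.I).mul_const w
  exact (hlin.cexp.const_mul c).congr_deriv (by ring)

section PhaseRotatedFamily

variable (hbar J H a d : ℝ) (c : ℂ)

lemma cwD_zero : cwD hbar J H a d c 0 = !![(a : ℂ), c; (starRingEnd ℂ) c, (d : ℂ)] := by
  ext p q
  fin_cases p <;> fin_cases q <;> simp [cwD]

lemma cwD_apply (t : ℝ) (p q : Fin 2) :
    cwD hbar J H a d c t p q = cwD hbar J H a d c 0 p q *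
      Complex.exp (Complex.I * t * ((H + hbar * J * (a - d)) * (spinZ p - spinZ q))) := by
  fin_cases p <;> fin_cases q <;> simp [cwD, spinZ]
  all_goals left; congr 1; ring

lemma trace_cwD (t : ℝ) : trace (cwD hbar J H a d c t) = a + d := by
  simp [cwD, trace]

lemma trace_sigmaZ_mul_cwD (t : ℝ) :
    trace (sigmaZ hbar * cwD hbar J H a d c t) = hbar / 2 * (a - d) := by
  simp [sigmaZ, cwD, trace]
  ring

end PhaseRotatedFamily

theorem stmt_10_general (hbar J H : ℝ) (hbar_ne : hbar ≠ 0) (a d : ℝ) (c : ℂ)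
    (had : a + d = 1) :
    cwD hbar J H a d c 0 = !![(a : ℂ), c; (starRingEnd ℂ) c, (d : ℂ)] ∧
    ∀ t : ℝ, 0 ≤ t → ∀ p q : Fin 2,
      HasDerivAt (fun s => cwD hbar J H a d c s p q)
        (((-(Complex.I / hbar)) • ptrSnd
            (cwV hbar J H * (cwD hbar J H a d c t ⊗ₖ cwD hbar J H a d c t)
              - (cwD hbar J H a d c t ⊗ₖ cwD hbar J H a d c t) * cwV hbar J H)) p q)
        t := by
  refine ⟨cwD_zero hbar J H a d c, fun t _ p q => ?_⟩
  have hderiv := hasDerivAt_mul_cexp_I_mul (cwD hbar J H a d c 0 p q)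
    ((H + hbar * J * (a - d)) * (spinZ p - spinZ q)) t
  simp only [← cwD_apply] at hderiv
  convert hderiv using 1
  rw [ptrSnd_cwV_commutator, trace_cwD, trace_sigmaZ_mul_cwD, sigmaZ_eq_diagonal,
    Matrix.smul_apply, Matrix.smul_apply, commutator_diagonal_apply]
  have hadC : (a : ℂ) + d = 1 := by exact_mod_cast had
  have hbarC : (hbar : ℂ) ≠ 0 := by exact_mod_cast hbar_ne
  rw [hadC, smul_eq_mul, smul_eq_mul]
  field_simp
  ring

/-- The phase-rotated family `D(t)` solves the nonlinear mean-field single-particle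
equation `dD/dt = −(i/ℏ)[V, D⊗D]⁽¹⁾`, with `D(0)` having entries `a, c, c̄, d`. -/
theorem stmt_10 (hbar J H : ℝ) (hbar_ne : hbar ≠ 0) (a d : ℝ) (c : ℂ)
    (ha : 0 ≤ a) (hd : 0 ≤ d) (had : a + d = 1) :
    cwD hbar J H a d c 0 = !![(a : ℂ), c; (starRingEnd ℂ) c, (d : ℂ)] ∧
    ∀ t : ℝ, 0 ≤ t → ∀ p q : Fin 2,
      HasDerivAt (fun s => cwD hbar J H a d c s p q)
        (((-(Complex.I / hbar)) • ptrSnd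
            (cwV hbar J H * (cwD hbar J H a d c t ⊗ₖ cwD hbar J H a d c t)
              - (cwD hbar J H a d c t ⊗ₖ cwD hbar J H a d c t) * cwV hbar J H)) p q)
        t :=
  stmt_10_general hbar J H hbar_ne a d c had
end

section
/- Let S be a finite set and for each n let ρ_n be a symmetric probability measure on S^n, and suppose the two-dimensional marginals ρ_n^{(2)} converge to the product measure ρ⊗ρ for some probability measure ρ on S. Then for every k, the k-dimensional marginals ρ_n^{(k)} converge to ρ^{⊗k}, i.e., (ρ_n) is ρ-chaotic. -/
open Finset Filter Topology

/-!
Let `F_y(s)` be the frequency of `s` among the coordinates of `y ∈ S^n`. Expanding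
`∏_r F_y(x_r)` as an average over all maps `i : Fin k → Fin n`, exchangeability makes every
injective `i` contribute exactly the marginal `ρ_n^{(k)}(x)`, and the non-injective maps form a
vanishing fraction `1 - n!/((n-k)! n^k)`. Hence `E ∏_r F(x_r)` and `ρ_n^{(k)}(x)` have the same
limit. For `k = 2` this gives `E F(s) → ρ(s)` (because `∑_t F(t) = 1`) and `E F(s)² → ρ(s)²`,
so the variance of `F(s)` tends to `0` and `F(s) → ρ(s)` in `L¹`. Since a product of numbers in
`[0, 1]` is `1`-Lipschitz in each factor, `E ∏_r F(x_r) → ∏_r ρ(x_r)`.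
-/

lemma abs_sum_sub_card_mul_le {ι : Type*} [Fintype ι] (P : ι → Prop) [DecidablePred P]
    (f : ι → ℝ) {c : ℝ} (hf : ∀ i, f i ∈ Set.Icc (0 : ℝ) 1) (hc : c ∈ Set.Icc (0 : ℝ) 1)
    (hP : ∀ i, P i → f i = c) :
    |∑ i, f i - Fintype.card ι * c| ≤ #{i | ¬ P i} := by
  have hsum : ∑ i, f i - Fintype.card ι * c = ∑ i with ¬ P i, (f i - c) := by
    rw [sum_filter_of_ne fun i _ hne => mt (fun hPi => by rw [hP i hPi, sub_self]) hne,
      sum_sub_distrib, sum_const, card_univ, nsmul_eq_mul]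
  calc |∑ i, f i - Fintype.card ι * c| ≤ ∑ i with ¬ P i, |f i - c| := by
        rw [hsum]; exact abs_sum_le_sum_abs _ _
    _ ≤ ∑ i with ¬ P i, (1 : ℝ) := by
        gcongr with i
        obtain ⟨hf0, hf1⟩ := hf i
        rw [abs_sub_le_iff]; constructor <;> linarith [hc.1, hc.2]
    _ = #{i | ¬ P i} := by simp

lemma card_filter_not_injective (α β : Type*) [Fintype α] [DecidableEq α] [Fintype β]
    [DecidableEq β] :
    (#{f : α → β | ¬ Function.Injective f} : ℝ)
      = Fintype.card β ^ Fintype.card α - (Fintype.card β).descFactorial (Fintype.card α) := by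
  have hinj : #{f : α → β | Function.Injective f}
      = (Fintype.card β).descFactorial (Fintype.card α) := by
    rw [← Fintype.card_subtype, ← Fintype.card_embedding_eq]
    exact Fintype.card_congr (Equiv.subtypeInjectiveEquivEmbedding α β)
  have h := card_filter_add_card_filter_not (s := (univ : Finset (α → β)))
    (fun f => Function.Injective f)
  rw [hinj, card_univ, Fintype.card_fun] at h
  rw [eq_sub_iff_add_eq']
  exact_mod_cast h

lemma abs_prod_sub_prod_le {ι : Type*} (s : Finset ι) {a b : ι → ℝ}
    (ha : ∀ i ∈ s, a i ∈ Set.Icc (0 : ℝ) 1) (hb : ∀ i ∈ s, b i ∈ Set.Icc (0 : ℝ) 1) :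
    |∏ i ∈ s, a i - ∏ i ∈ s, b i| ≤ ∑ i ∈ s, |a i - b i| := by
  classical
  induction s using Finset.induction_on with
  | empty => simp
  | insert c s hc ih =>
    rw [prod_insert hc, prod_insert hc, sum_insert hc]
    have hac := ha c (mem_insert_self c s)
    have hbs : ∀ i ∈ s, b i ∈ Set.Icc (0 : ℝ) 1 := fun i hi => hb i (mem_insert_of_mem hi)
    have hprod : |∏ i ∈ s, b i| ≤ 1 := by
      rw [abs_of_nonneg (prod_nonneg fun i hi => (hbs i hi).1)]
      exact prod_le_one (fun i hi => (hbs i hi).1) (fun i hi => (hbs i hi).2)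
    calc |a c * ∏ i ∈ s, a i - b c * ∏ i ∈ s, b i|
        = |a c * (∏ i ∈ s, a i - ∏ i ∈ s, b i) + (a c - b c) * ∏ i ∈ s, b i| := by ring_nf
      _ ≤ |a c| * |∏ i ∈ s, a i - ∏ i ∈ s, b i| + |a c - b c| * |∏ i ∈ s, b i| := by
        rw [← abs_mul, ← abs_mul]; exact abs_add_le _ _
      _ ≤ 1 * ∑ i ∈ s, |a i - b i| + |a c - b c| * 1 := by
        rw [abs_of_nonneg hac.1]
        gcongr
        exacts [hac.2, ih (fun i hi => ha i (mem_insert_of_mem hi)) hbs]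
      _ = |a c - b c| + ∑ i ∈ s, |a i - b i| := by ring

lemma tendsto_descFactorial_div_pow (k : ℕ) :
    Tendsto (fun n : ℕ => (n.descFactorial k : ℝ) / (n : ℝ) ^ k) atTop (𝓝 1) :=
  (Asymptotics.isEquivalent_iff_tendsto_one (eventually_ne_atTop 0 |>.mono fun n hn => by
    positivity)).mp (isEquivalent_descFactorial k)

lemma sq_sum_mul_abs_le_sum_mul_sq {α : Type*} [Fintype α] {w : α → ℝ} (hw0 : ∀ a, 0 ≤ w a)
    (hw1 : ∑ a, w a = 1) (f : α → ℝ) : (∑ a, w a * |f a|) ^ 2 ≤ ∑ a, w a * f a ^ 2 := by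
  simpa [hw1] using sum_sq_le_sum_mul_sum_of_sq_le_mul univ (r := fun a => w a * |f a|)
    (fun a _ => hw0 a) (fun a _ => mul_nonneg (hw0 a) (sq_nonneg (f a)))
    (fun a _ => by rw [mul_pow, sq_abs, sq, mul_assoc])

lemma tendsto_sum_mul_abs_sub_of_tendsto_moments {β : Type*} {l : Filter β} {α : β → Type*}
    [∀ b, Fintype (α b)] {w X : ∀ b, α b → ℝ} {a : ℝ} (hw0 : ∀ b y, 0 ≤ w b y)
    (hw1 : ∀ b, ∑ y, w b y = 1) (h1 : Tendsto (fun b => ∑ y, w b y * X b y) l (𝓝 a))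
    (h2 : Tendsto (fun b => ∑ y, w b y * X b y ^ 2) l (𝓝 (a ^ 2))) :
    Tendsto (fun b => ∑ y, w b y * |X b y - a|) l (𝓝 0) := by
  have hvar : ∀ b, ∑ y, w b y * (X b y - a) ^ 2
      = ∑ y, w b y * X b y ^ 2 - 2 * a * ∑ y, w b y * X b y + a ^ 2 := fun b => by
    rw [mul_sum, ← mul_one (a ^ 2), ← hw1 b, mul_sum, ← sum_sub_distrib, ← sum_add_distrib]
    exact sum_congr rfl fun y _ => by ring
  have hvar0 : Tendsto (fun b => ∑ y, w b y * (X b y - a) ^ 2) l (𝓝 0) := by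
    simp_rw [hvar]
    convert (h2.sub (h1.const_mul (2 * a))).add_const (a ^ 2) using 2
    ring
  refine squeeze_zero (fun b => sum_nonneg fun y _ => mul_nonneg (hw0 b y) (abs_nonneg _))
    (fun b => Real.le_sqrt_of_sq_le (sq_sum_mul_abs_le_sum_mul_sq (hw0 b) (hw1 b) _)) ?_
  simpa using hvar0.sqrt

section Empirical

variable {ι κ S : Type*} [Fintype ι] [Fintype κ] [DecidableEq S]

noncomputable def empiricalFreq (y : ι → S) (s : S) : ℝ := #{m | y m = s} / Fintype.card ι

lemma empiricalFreq_mem_Icc (y : ι → S) (s : S) : empiricalFreq y s ∈ Set.Icc (0 : ℝ) 1 :=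
  ⟨by unfold empiricalFreq; positivity,
    div_le_one_of_le₀ (mod_cast card_le_univ _) (Nat.cast_nonneg _)⟩

lemma card_filter_comp_eq_prod [DecidableEq κ] (y : ι → S) (x : κ → S) :
    #{i : κ → ι | y ∘ i = x} = ∏ r, #{m | y m = x r} := by
  rw [← Fintype.card_piFinset]
  congr 1
  ext i
  simp [Fintype.mem_piFinset, funext_iff]

variable [Fintype S]

lemma sum_empiricalFreq [Nonempty ι] (y : ι → S) : ∑ s, empiricalFreq y s = 1 := by
  simp_rw [empiricalFreq]
  rw [← sum_div, div_eq_one_iff_eq (mod_cast Fintype.card_ne_zero),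
    ← card_univ, card_eq_sum_card_fiberwise (f := y) (t := univ) fun _ _ => mem_univ _]
  push_cast; rfl

variable [DecidableEq ι]

noncomputable def marginalAlong (q : (ι → S) → ℝ) (i : κ → ι) (x : κ → S) : ℝ :=
  ∑ y with y ∘ i = x, q y

noncomputable def empiricalMoment (q : (ι → S) → ℝ) (x : κ → S) : ℝ :=
  ∑ y, q y * ∏ r, empiricalFreq y (x r)

lemma empiricalMoment_eq [Nonempty ι] [DecidableEq κ] (q : (ι → S) → ℝ) (x : κ → S) :
    empiricalMoment q x
      = (∑ i : κ → ι, marginalAlong q i x) / Fintype.card ι ^ Fintype.card κ := by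
  simp_rw [empiricalMoment, empiricalFreq, prod_div_distrib, prod_const, card_univ,
    ← Nat.cast_prod, ← card_filter_comp_eq_prod, marginalAlong, sum_filter, natCast_card_filter,
    mul_div_assoc', ← sum_div, mul_sum]
  rw [sum_comm]
  simp

lemma marginalAlong_mem_Icc {q : (ι → S) → ℝ} (hq0 : ∀ y, 0 ≤ q y) (hq1 : ∑ y, q y = 1)
    (i : κ → ι) (x : κ → S) : marginalAlong q i x ∈ Set.Icc (0 : ℝ) 1 :=
  ⟨sum_nonneg fun y _ => hq0 y,
    hq1 ▸ sum_le_sum_of_subset_of_nonneg (filter_subset _ _) fun y _ _ => hq0 y⟩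

lemma marginalAlong_eq_of_injective {q : (ι → S) → ℝ}
    (hq : ∀ (π : Equiv.Perm ι) (y : ι → S), q (y ∘ π) = q y)
    {i j : κ → ι} (hi : Function.Injective i) (hj : Function.Injective j) (x : κ → S) :
    marginalAlong q i x = marginalAlong q j x := by
  obtain ⟨σ, hσ⟩ := Equiv.Perm.exists_extending_pair j i hj hi
  have hcomp : ∀ y : ι → S, (y ∘ σ) ∘ j = y ∘ i := fun y => funext fun r => by simp [hσ]
  simp_rw [marginalAlong, sum_filter]
  rw [← (σ.symm.arrowCongr (Equiv.refl S)).sum_comp (fun y => if y ∘ j = x then q y else 0)]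
  refine sum_congr rfl fun y _ => ?_
  change _ = if (y ∘ σ) ∘ j = x then q (y ∘ σ) else 0
  rw [hcomp, hq]

lemma abs_empiricalMoment_sub_marginalAlong_le [Nonempty ι] [DecidableEq κ]
    {q : (ι → S) → ℝ} (hq0 : ∀ y, 0 ≤ q y) (hq1 : ∑ y, q y = 1)
    (hq : ∀ (π : Equiv.Perm ι) (y : ι → S), q (y ∘ π) = q y)
    {i : κ → ι} (hi : Function.Injective i) (x : κ → S) :
    |empiricalMoment q x - marginalAlong q i x|
      ≤ 1 - (Fintype.card ι).descFactorial (Fintype.card κ)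
        / (Fintype.card ι ^ Fintype.card κ : ℝ) := by
  have hN : (0 : ℝ) < Fintype.card ι ^ Fintype.card κ := by positivity
  have hcount := abs_sum_sub_card_mul_le (fun j : κ → ι => Function.Injective j)
    (fun j => marginalAlong q j x) (fun j => marginalAlong_mem_Icc hq0 hq1 j x)
    (marginalAlong_mem_Icc hq0 hq1 i x) (fun j hj => marginalAlong_eq_of_injective hq hj hi x)
  rw [card_filter_not_injective, Fintype.card_fun, Nat.cast_pow] at hcount
  rw [empiricalMoment_eq, div_sub' hN.ne', abs_div, abs_of_pos hN, one_sub_div hN.ne']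
  exact div_le_div_of_nonneg_right hcount hN.le

lemma sum_mul_empiricalFreq_eq_sum_empiricalMoment [Nonempty ι] (q : (ι → S) → ℝ) (s : S) :
    ∑ y, q y * empiricalFreq y s = ∑ t, empiricalMoment q ![s, t] := by
  simp only [empiricalMoment, Fin.prod_univ_two, Matrix.cons_val_zero, Matrix.cons_val_one,
    Matrix.cons_val_fin_one]
  rw [sum_comm]
  simp_rw [← mul_assoc, ← mul_sum, sum_empiricalFreq, mul_one]

lemma sum_mul_empiricalFreq_sq (q : (ι → S) → ℝ) (s : S) :
    ∑ y, q y * empiricalFreq y s ^ 2 = empiricalMoment q ![s, s] := by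
  simp [empiricalMoment, Fin.prod_univ_two, sq]

lemma abs_empiricalMoment_sub_prod_le {q : (ι → S) → ℝ} (hq0 : ∀ y, 0 ≤ q y)
    (hq1 : ∑ y, q y = 1) {ρ : S → ℝ} (hρ : ∀ s, ρ s ∈ Set.Icc (0 : ℝ) 1) (x : κ → S) :
    |empiricalMoment q x - ∏ r, ρ (x r)|
      ≤ ∑ r, ∑ y, q y * |empiricalFreq y (x r) - ρ (x r)| := by
  calc |empiricalMoment q x - ∏ r, ρ (x r)|
      = |∑ y, q y * (∏ r, empiricalFreq y (x r) - ∏ r, ρ (x r))| := by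
        simp_rw [mul_sub, sum_sub_distrib, ← sum_mul, hq1, one_mul, empiricalMoment]
    _ ≤ ∑ y, q y * ∑ r, |empiricalFreq y (x r) - ρ (x r)| := by
        refine (abs_sum_le_sum_abs _ _).trans (sum_le_sum fun y _ => ?_)
        rw [abs_mul, abs_of_nonneg (hq0 y)]
        exact mul_le_mul_of_nonneg_left (abs_prod_sub_prod_le univ
          (fun r _ => empiricalFreq_mem_Icc y (x r)) (fun r _ => hρ (x r))) (hq0 y)
    _ = ∑ r, ∑ y, q y * |empiricalFreq y (x r) - ρ (x r)| := by
        simp_rw [mul_sum]; exact sum_comm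

end Empirical

section FirstMarginals

variable {S : Type*} [Fintype S] [DecidableEq S]

noncomputable def marginal {n : ℕ} (q : (Fin n → S) → ℝ) {k : ℕ} (x : Fin k → S) : ℝ :=
  ∑ y ∈ univ.filter
    (fun y : Fin n → S => ∀ i : Fin n, (h : (i : ℕ) < k) → y i = x ⟨i, h⟩), q y

lemma marginal_eq_marginalAlong_castLE {n k : ℕ} (hkn : k ≤ n) (q : (Fin n → S) → ℝ)
    (x : Fin k → S) : marginal q x = marginalAlong q (Fin.castLE hkn) x := by
  refine sum_congr (filter_congr fun y _ => ⟨fun h => funext fun r => h _ r.2, ?_⟩)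
    fun _ _ => rfl
  rintro h i hik
  exact congrFun h ⟨i, hik⟩

lemma tendsto_empiricalMoment_sub_marginal {p : (n : ℕ) → (Fin n → S) → ℝ}
    (hp0 : ∀ n y, 0 ≤ p n y) (hp1 : ∀ n, ∑ y, p n y = 1)
    (hsym : ∀ n (π : Equiv.Perm (Fin n)) (y : Fin n → S), p n (y ∘ π) = p n y)
    {k : ℕ} (x : Fin k → S) :
    Tendsto (fun n => empiricalMoment (p n) x - marginal (p n) x) atTop (𝓝 0) := by
  have hbound : ∀ᶠ n in atTop, ‖empiricalMoment (p n) x - marginal (p n) x‖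
      ≤ 1 - (n.descFactorial k : ℝ) / (n : ℝ) ^ k := by
    filter_upwards [eventually_ge_atTop (max k 1)] with n hn
    have hkn : k ≤ n := le_of_max_le_left hn
    have : Nonempty (Fin n) := ⟨⟨0, le_of_max_le_right hn⟩⟩
    simpa [marginal_eq_marginalAlong_castLE hkn] using abs_empiricalMoment_sub_marginalAlong_le
      (hp0 n) (hp1 n) (hsym n) (Fin.castLE_injective hkn) x
  refine squeeze_zero_norm' hbound ?_
  simpa using (tendsto_descFactorial_div_pow k).const_sub 1

lemma tendsto_sum_mul_empiricalFreq {p : (n : ℕ) → (Fin n → S) → ℝ} {ρ : S → ℝ}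
    (hρsum : ∑ s, ρ s = 1)
    (hmom2 : ∀ x : Fin 2 → S,
      Tendsto (fun n => empiricalMoment (p n) x) atTop (𝓝 (ρ (x 0) * ρ (x 1))))
    (s : S) : Tendsto (fun n => ∑ y, p n y * empiricalFreq y s) atTop (𝓝 (ρ s)) := by
  have hsum : Tendsto (fun n => ∑ t, empiricalMoment (p n) ![s, t]) atTop
      (𝓝 (∑ t, ρ s * ρ t)) := tendsto_finsetSum _ fun t _ => by simpa using hmom2 ![s, t]
  rw [← mul_sum, hρsum, mul_one] at hsum
  refine hsum.congr' (eventually_ge_atTop 1 |>.mono fun n hn => ?_)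
  have : Nonempty (Fin n) := ⟨⟨0, hn⟩⟩
  exact (sum_mul_empiricalFreq_eq_sum_empiricalMoment (p n) s).symm

end FirstMarginals

theorem stmt_11_general (S : Type*) [Fintype S] [DecidableEq S]
    (p : (n : ℕ) → (Fin n → S) → ℝ) (ρ : S → ℝ)
    (hnonneg : ∀ n x, 0 ≤ p n x)
    (hsum : ∀ n, ∑ x : Fin n → S, p n x = 1)
    (hsym : ∀ n (π : Equiv.Perm (Fin n)) (x : Fin n → S), p n (x ∘ π) = p n x)
    (hρsum : ∑ s : S, ρ s = 1)
    (h2 : ∀ x : Fin 2 → S,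
      Tendsto (fun n => ∑ y ∈ univ.filter
            (fun y : Fin n → S => ∀ i : Fin n, (h : (i : ℕ) < 2) → y i = x ⟨i, h⟩),
          p n y)
        atTop (𝓝 (ρ (x 0) * ρ (x 1)))) :
    ∀ (k : ℕ) (x : Fin k → S),
      Tendsto (fun n => ∑ y ∈ univ.filter
            (fun y : Fin n → S => ∀ i : Fin n, (h : (i : ℕ) < k) → y i = x ⟨i, h⟩),
          p n y)
        atTop (𝓝 (∏ r : Fin k, ρ (x r))) := by
  intro k x
  change ∀ x : Fin 2 → S, Tendsto (fun n => marginal (p n) x) atTop _ at h2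
  change Tendsto (fun n => marginal (p n) x) atTop _
  have hmom2 : ∀ x : Fin 2 → S,
      Tendsto (fun n => empiricalMoment (p n) x) atTop (𝓝 (ρ (x 0) * ρ (x 1))) := fun x => by
    simpa using (tendsto_empiricalMoment_sub_marginal hnonneg hsum hsym x).add (h2 x)
  have hfreq := tendsto_sum_mul_empiricalFreq hρsum hmom2
  have hρ : ∀ s, ρ s ∈ Set.Icc (0 : ℝ) 1 := fun s =>
    isClosed_Icc.mem_of_tendsto (hfreq s) (Eventually.of_forall fun n => by
      simpa using (convex_Icc (0 : ℝ) 1).sum_mem (fun y _ => hnonneg n y) (hsum n)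
        (fun y _ => empiricalFreq_mem_Icc y s))
  have hdev : ∀ s, Tendsto (fun n => ∑ y, p n y * |empiricalFreq y s - ρ s|) atTop (𝓝 0) :=
    fun s => tendsto_sum_mul_abs_sub_of_tendsto_moments hnonneg hsum (hfreq s)
      (by simp_rw [sum_mul_empiricalFreq_sq]; rw [sq]; exact hmom2 ![s, s])
  have hmom : Tendsto (fun n => empiricalMoment (p n) x) atTop (𝓝 (∏ r, ρ (x r))) := by
    refine tendsto_iff_norm_sub_tendsto_zero.mpr (squeeze_zero (fun _ => norm_nonneg _)
      (fun n => abs_empiricalMoment_sub_prod_le (hnonneg n) (hsum n) hρ x) ?_)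
    simpa using tendsto_finsetSum univ fun r _ => hdev (x r)
  simpa using hmom.sub (tendsto_empiricalMoment_sub_marginal hnonneg hsum hsym x)

/-- If symmetric probability measures `ρ_n` on `S^n` (for a finite set `S`) have
two-dimensional marginals converging to a product `ρ ⊗ ρ`, then for every `k` the
`k`-dimensional marginals converge to `ρ^⊗k`; i.e. `(ρ_n)` is `ρ`-chaotic. -/
theorem stmt_11 (S : Type*) [Fintype S] [DecidableEq S]
    (p : (n : ℕ) → (Fin n → S) → ℝ) (ρ : S → ℝ)
    (hnonneg : ∀ n x, 0 ≤ p n x)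
    (hsum : ∀ n, ∑ x : Fin n → S, p n x = 1)
    (hsym : ∀ n (π : Equiv.Perm (Fin n)) (x : Fin n → S), p n (x ∘ π) = p n x)
    (hρnonneg : ∀ s, 0 ≤ ρ s) (hρsum : ∑ s : S, ρ s = 1)
    (h2 : ∀ x : Fin 2 → S,
      Tendsto (fun n => ∑ y ∈ univ.filter
            (fun y : Fin n → S => ∀ i : Fin n, (h : (i : ℕ) < 2) → y i = x ⟨i, h⟩),
          p n y)
        atTop (𝓝 (ρ (x 0) * ρ (x 1)))) :
    ∀ (k : ℕ) (x : Fin k → S),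
      Tendsto (fun n => ∑ y ∈ univ.filter
            (fun y : Fin n → S => ∀ i : Fin n, (h : (i : ℕ) < k) → y i = x ⟨i, h⟩),
          p n y)
        atTop (𝓝 (∏ r : Fin k, ρ (x r))) :=
  stmt_11_general S p ρ hnonneg hsum hsym hρsum h2
end
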